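/- arXiv:2210.00625 — 4 statements merged into one kernel-verified Lean document; each statement's English description precedes it below -/
import Mathlib

section
/- Let G be a finite n-person game (in pure strategies). No Nash equilibrium q* Pareto dominates an optimin point p*: it is not the case that u_i(q*) ≥ u_i(p*) for every player i with u_j(q*) > u_j(p*) for some player j. -/
/-- `s` is in `B_i(p)`: either `s` is a strictly profitable unilateral deviation
for player `i` at profile `p`, or `s` is `i`'s strategy in `p`. -/
def InDevSet {N : Type*} [DecidableEq N] {S : N → Type*}
    (u : N → (∀ j, S j) → ℝ) (p : ∀ j, S j) (i : N) (s : S i) : Prop :=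
  u i (Function.update p i s) > u i p ∨ s = p i

/-- The guaranteed value `v_i(p)`: the minimum payoff of player `i` over all
profiles obtained from `p` by the opponents each choosing an element of their
profitable-deviation set `B_j(p)` (player `i` keeps `p i`). -/
noncomputable def gVal {N : Type*} [DecidableEq N] {S : N → Type*}
    (u : N → (∀ j, S j) → ℝ) (p : ∀ j, S j) (i : N) : ℝ :=
  sInf ((u i) '' {q : ∀ j, S j | q i = p i ∧ ∀ j, j ≠ i → InDevSet u p j (q j)})

/-- Nash equilibrium: no player has a strictly profitable unilateral deviation. -/
def IsNash {N : Type*} [DecidableEq N] {S : N → Type*}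
    (u : N → (∀ j, S j) → ℝ) (p : ∀ j, S j) : Prop :=
  ∀ i, ∀ s : S i, u i p ≥ u i (Function.update p i s)

/-- Optimin point: Pareto-maximal profile for the vector of guaranteed values. -/
def IsOptimin {N : Type*} [DecidableEq N] {S : N → Type*}
    (u : N → (∀ j, S j) → ℝ) (p : ∀ j, S j) : Prop :=
  ¬ ∃ q : ∀ j, S j, (∀ i, gVal u q i ≥ gVal u p i) ∧ ∃ j, gVal u q j > gVal u p j

lemma gVal_le_u {N : Type*} [Fintype N] [DecidableEq N] {S : N → Type*}
    [∀ i, Fintype (S i)] (u : N → (∀ j, S j) → ℝ) (p : ∀ j, S j) (i : N) :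
    gVal u p i ≤ u i p := by
  have hfin : ((u i) '' {q : ∀ j, S j | q i = p i ∧
      ∀ j, j ≠ i → InDevSet u p j (q j)}).Finite :=
    (Set.finite_univ.subset (Set.subset_univ _)).image _
  exact csInf_le hfin.bddBelow ⟨p, ⟨rfl, fun j _ => Or.inr rfl⟩, rfl⟩

lemma gVal_nash {N : Type*} [Fintype N] [DecidableEq N] {S : N → Type*}
    [∀ i, Fintype (S i)] (u : N → (∀ j, S j) → ℝ) (p : ∀ j, S j)
    (hq : IsNash u p) (i : N) : gVal u p i = u i p := by
  have hset : {q : ∀ j, S j | q i = p i ∧ ∀ j, j ≠ i → InDevSet u p j (q j)} = {p} := by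
    ext q
    simp only [Set.mem_setOf_eq, Set.mem_singleton_iff]
    constructor
    · rintro ⟨h1, h2⟩
      funext j
      by_cases hj : j = i
      · subst hj; exact h1
      · rcases h2 j hj with h | h
        · exact absurd (hq j (q j)) (not_le.mpr h)
        · exact h
    · rintro rfl; exact ⟨rfl, fun j _ => Or.inr rfl⟩
  rw [gVal, hset, Set.image_singleton, csInf_singleton]

/-- No Nash equilibrium `q*` Pareto dominates an optimin point `p*`. -/
theorem nash_never_pareto_dominates_optimin {N : Type*} [Fintype N] [Nonempty N] [DecidableEq N]
    {S : N → Type*} [∀ i, Fintype (S i)] [∀ i, Nonempty (S i)]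
    (u : N → (∀ j, S j) → ℝ) (qstar pstar : ∀ j, S j)
    (hq : IsNash u qstar) (hp : IsOptimin u pstar) :
    ¬ ((∀ i, u i qstar ≥ u i pstar) ∧ ∃ j, u j qstar > u j pstar) := by
  rintro ⟨hall, j, hj⟩
  refine hp ⟨qstar, fun i => ?_, j, ?_⟩
  · rw [gVal_nash u qstar hq i]
    exact le_trans (gVal_le_u u pstar i) (hall i)
  · rw [gVal_nash u qstar hq j]
    exact lt_of_le_of_lt (gVal_le_u u pstar j) hj
end

section
/- Every finite n-person game (in pure strategies) possesses at least one optimin point. -/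
/-- Every finite game possesses at least one optimin point. -/
theorem exists_optimin {N : Type*} [Fintype N] [Nonempty N] [DecidableEq N]
    {S : N → Type*} [∀ i, Fintype (S i)] [∀ i, Nonempty (S i)]
    (u : N → (∀ j, S j) → ℝ) :
    ∃ pstar : ∀ j, S j, IsOptimin u pstar := by
  haveI : Fintype (∀ j, S j) := Pi.instFintype
  obtain ⟨p, -, hp⟩ := Finset.exists_max_image (Finset.univ : Finset (∀ j, S j))
    (fun p => ∑ i, gVal u p i) ⟨Classical.arbitrary _, Finset.mem_univ _⟩
  refine ⟨p, fun ⟨q, hq, j, hj⟩ => ?_⟩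
  have : ∑ i, gVal u p i < ∑ i, gVal u q i :=
    Finset.sum_lt_sum (fun i _ => hq i) ⟨j, Finset.mem_univ j, hj⟩
  exact absurd (hp q (Finset.mem_univ q)) (not_le.mpr this)
end

section
/- Let G be a finite n-person game (in pure strategies). For every strategy profile q of G there exists an optimin point p* such that v_i(p*) ≥ v_i(q) for every player i (every profile is weakly dominated, in guaranteed values, by some optimin point). -/
/-- Every strategy profile is weakly dominated, in guaranteed values, by some
optimin point. -/
theorem exists_optimin_above {N : Type*} [Fintype N] [Nonempty N] [DecidableEq N]
    {S : N → Type*} [∀ i, Fintype (S i)] [∀ i, Nonempty (S i)]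
    (u : N → (∀ j, S j) → ℝ) (q : ∀ j, S j) :
    ∃ pstar : ∀ j, S j, IsOptimin u pstar ∧ ∀ i, gVal u pstar i ≥ gVal u q i := by
  classical
  obtain ⟨p, hp, hmax⟩ := Finset.exists_max_image
    (Finset.univ.filter fun p : ∀ j, S j => ∀ i, gVal u p i ≥ gVal u q i)
    (fun p => ∑ i, gVal u p i)
    ⟨q, by simp⟩
  refine ⟨p, ?_, (Finset.mem_filter.mp hp).2⟩
  rintro ⟨r, hr, j, hj⟩
  have hrq : ∀ i, gVal u r i ≥ gVal u q i :=
    fun i => le_trans ((Finset.mem_filter.mp hp).2 i) (hr i)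
  have h1 := hmax r (by simp [hrq])
  have hlt : ∑ i, gVal u p i < ∑ i, gVal u r i :=
    Finset.sum_lt_sum (fun i _ => hr i) ⟨j, Finset.mem_univ j, hj⟩
  linarith
end

section
/- In every finite n-person game (in pure strategies) there exists an optimin point p* such that for every player i, v_i(p*) ≥ max_{s_i ∈ S_i} min_{s_{-i} ∈ ∏_{j≠i} S_j} u_i(s_i, s_{-i}); that is, some optimin point guarantees each player at least their maximin value even under unilateral profitable deviations of the others. -/
/-- Player `i`'s maximin value:
`max_{s_i ∈ S_i} min_{s_{-i} ∈ ∏_{j ≠ i} S_j} u_i(s_i, s_{-i})`. -/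
noncomputable def maximinVal {N : Type*} {S : N → Type*}
    (u : N → (∀ j, S j) → ℝ) (i : N) : ℝ :=
  sSup ((fun s : S i => sInf ((u i) '' {p : ∀ j, S j | p i = s})) '' Set.univ)

/-- Some optimin point guarantees each player at least their maximin value, even
under unilateral profitable deviations of the others. -/
theorem exists_optimin_ge_maximin {N : Type*} [Fintype N] [Nonempty N] [DecidableEq N]
    {S : N → Type*} [∀ i, Fintype (S i)] [∀ i, Nonempty (S i)]
    (u : N → (∀ j, S j) → ℝ) :
    ∃ pstar : ∀ j, S j, IsOptimin u pstar ∧ ∀ i, gVal u pstar i ≥ maximinVal u i := by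
  classical
  -- the inner minimum function
  set f : ∀ i, S i → ℝ := fun i s => sInf ((u i) '' {p : ∀ j, S j | p i = s}) with hf
  -- choose a maximin strategy for each player
  have hmax : ∀ i, ∃ s : S i, f i s = maximinVal u i := by
    intro i
    have hfin : ((fun s : S i => f i s) '' Set.univ).Finite :=
      (Set.finite_univ.image _)
    have hne : ((fun s : S i => f i s) '' Set.univ).Nonempty :=
      (Set.univ_nonempty).image _
    have := hne.csSup_mem hfin
    rw [maximinVal]
    obtain ⟨s, -, hs⟩ := this
    exact ⟨s, hs⟩
  choose sstar hsstar using hmax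
  -- gVal p i ≥ f i (p i) always
  have key : ∀ (p : ∀ j, S j) (i : N), f i (p i) ≤ gVal u p i := by
    intro p i
    apply csInf_le_csInf
    · exact (Set.toFinite _).bddBelow
    · refine ⟨u i p, p, ⟨rfl, fun j _ => Or.inr rfl⟩, rfl⟩
    · exact Set.image_mono (fun q hq => hq.1)
  -- the set of "good" profiles
  set D : Set (∀ j, S j) := {p | ∀ i, maximinVal u i ≤ gVal u p i} with hD
  have hDne : D.Nonempty := by
    refine ⟨sstar, fun i => ?_⟩
    rw [← hsstar i]
    exact key sstar i
  have hDfin : D.Finite := Set.toFinite D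
  obtain ⟨p, hpD, hpmax⟩ := Set.Finite.exists_maximalFor (fun p => ∑ i, gVal u p i) D hDfin hDne
  refine ⟨p, ?_, fun i => hpD i⟩
  rintro ⟨q, hge, j, hgt⟩
  have hqD : q ∈ D := fun i => le_trans (hpD i) (hge i)
  have hsum : ∑ i, gVal u p i < ∑ i, gVal u q i := by
    apply Finset.sum_lt_sum (fun i _ => hge i) ⟨j, Finset.mem_univ j, hgt⟩
  exact absurd (hpmax hqD hsum.le) (not_le.mpr hsum)
end
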